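/- Let w ∈ S_{n+1} and let λ = (λ^1,…,λ^{2n−1}) be a sequence of partitions. Then the number of sequences (T_1,…,T_{2n−1}) of semistandard Young tableaux such that the shape of T_i is the conjugate (λ^i)', the entries of T_i are at most min(i, 2n−i), and col(T_1)⋯col(T_{2n−1}) is a reduced word for w, equals Σ ∏_{i=1}^{2n−1} N(u_i, λ^i), where the sum is over all reduced factorizations u_1 u_2 ⋯ u_{2n−1} = w (meaning the product equals w and Σ ℓ(u_i) = ℓ(w)) with u_i ∈ S_{min(i,2n−i)+1} for each i, and N(u, α) denotes the number of semistandard Young tableaux of shape α' whose column word is a reduced word for u. -/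

import Mathlib

open scoped Classical

noncomputable section

namespace SchubertQuiver

/-- We model the symmetric group `S_∞` as permutations of `ℕ`, acting on the points
`1, 2, 3, …` (the point `0` is fixed by all permutations we consider). -/
abbrev Perm' := Equiv.Perm ℕ

/-- The simple transposition `s i = (i, i+1)`. -/
def sT (i : ℕ) : Perm' := Equiv.swap i (i + 1)

/-- The product `s_{e₁} ⋯ s_{e_ℓ}` associated to a word `(e₁, …, e_ℓ)`. -/
def wordProd (l : List ℕ) : Perm' := (l.map sT).prod

/-- The Coxeter length of a permutation: the least length of a word expressing it. -/
def len (w : Perm') : ℕ := sInf {m | ∃ l : List ℕ, wordProd l = w ∧ l.length = m}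

/-- `l` is a reduced word for `w`. -/
def IsReducedWord (w : Perm') (l : List ℕ) : Prop := wordProd l = w ∧ l.length = len w

/-- `w ∈ S_N`: the permutation `w` permutes `{1, …, N}` (and fixes everything else). -/
def MemS (N : ℕ) (w : Perm') : Prop := w 0 = 0 ∧ ∀ k, N < k → w k = k

/-- The longest element of `S_N`, i.e. `i ↦ N + 1 - i` on `{1, …, N}`. -/
def longest (N : ℕ) : Perm' :=
  Function.Involutive.toPerm (fun k => if 1 ≤ k ∧ k ≤ N then N + 1 - k else k)
    (by intro k; dsimp only; split_ifs <;> omega)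

/-! ### Single and double Schubert polynomials, as families satisfying the
defining divided-difference recursion. -/

abbrev SPoly := MvPolynomial ℕ ℤ

open MvPolynomial in
/-- `S` is the family of single Schubert polynomials `w ↦ 𝔖_w(X)` (in the variables
`x₁, x₂, …`, where `x_i` is the variable `X i`): it satisfies
`𝔖_{w₀} = x₁^{N-1} ⋯ x_{N-1}` for the longest element `w₀` of each `S_N`, and the
divided-difference recursion `∂_i 𝔖_{w sᵢ} = 𝔖_w` whenever `ℓ(w sᵢ) = ℓ(w) + 1`,
stated in the division-free form
`(x_i - x_{i+1}) · 𝔖_w = 𝔖_{w sᵢ} - (𝔖_{w sᵢ} with x_i, x_{i+1} exchanged)`. -/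
structure IsSchubertFamily (S : Perm' → SPoly) : Prop where
  base : ∀ N : ℕ, S (longest N) = ∏ i ∈ Finset.Icc 1 N, (X i : SPoly) ^ (N - i)
  step : ∀ (w : Perm') (i : ℕ), 1 ≤ i → len (w * sT i) = len w + 1 →
    (X i - X (i + 1)) * S w =
      S (w * sT i) - rename (Equiv.swap i (i + 1) : ℕ → ℕ) (S (w * sT i))

abbrev DPoly := MvPolynomial (ℕ ⊕ ℕ) ℤ

/-- The variable `x_i`. -/
def xv (i : ℕ) : DPoly := MvPolynomial.X (Sum.inl i)
/-- The variable `y_j`. -/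
def yv (j : ℕ) : DPoly := MvPolynomial.X (Sum.inr j)

open MvPolynomial in
/-- `DS` is the family of double Schubert polynomials `w ↦ 𝔖_w(X; Y)`:
`𝔖_{w₀}(X;Y) = ∏_{i+j ≤ N} (x_i - y_j)` for the longest element of each `S_N`, and
the divided-difference recursion (acting on the x-variables) in division-free form. -/
structure IsDoubleSchubertFamily (DS : Perm' → DPoly) : Prop where
  base : ∀ N : ℕ, DS (longest N) =
    ∏ p ∈ (Finset.Icc 1 N ×ˢ Finset.Icc 1 N).filter (fun p : ℕ × ℕ => p.1 + p.2 ≤ N),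
      (xv p.1 - yv p.2)
  step : ∀ (w : Perm') (i : ℕ), 1 ≤ i → len (w * sT i) = len w + 1 →
    (xv i - xv (i + 1)) * DS w =
      DS (w * sT i) -
        rename (Equiv.sumCongr (Equiv.swap i (i + 1)) (Equiv.refl ℕ) : ℕ ⊕ ℕ → ℕ ⊕ ℕ)
          (DS (w * sT i))

/-! ### Schur determinants -/

variable {A : Type} [CommRing A]

/-- The elements `h_k` determined by
`Σ_k h_k t^k = (1 - d₁ t + d₂ t² - ⋯) / (1 - c₁ t + c₂ t² - ⋯)`.
(The value of `c 0`, `d 0` is ignored; the constant terms of both series are `1`.) -/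
def hSeq (c d : ℕ → A) (k : ℕ) : A :=
  PowerSeries.coeff k
    ((PowerSeries.mk fun j => if j = 0 then 1 else (-1) ^ j * d j) *
      PowerSeries.invOfUnit (PowerSeries.mk fun j => if j = 0 then 1 else (-1) ^ j * c j) 1)

/-- `h_k` for an integer index, with `h_k = 0` for `k < 0`. -/
def hZ (c d : ℕ → A) (k : ℤ) : A := if k < 0 then 0 else hSeq c d k.toNat

/-- The Schur determinant `s_μ(c - d) = det(h_{μ_i + j - i})`, the determinant being of
size the number of (nonzero) rows of `μ`. -/
def schurDet (c d : ℕ → A) (μ : YoungDiagram) : A :=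
  Matrix.det (Matrix.of fun i j : Fin (μ.colLen 0) =>
    hZ c d ((μ.rowLen i : ℤ) + (j : ℤ) - (i : ℤ)))

/-! ### Column words of semistandard tableaux

Mathlib's `SemistandardYoungTableau` has entries in `ℕ = {0, 1, 2, …}`; we identify a
tableau with positive entries (as in the paper) with a Mathlib tableau via the shift
`e ↦ e - 1`.  Thus the letter recorded in the column word of a cell with (Mathlib) entry
`e` is `e + 1`, and "the entries of `T` are at most `m`" becomes `T i j + 1 ≤ m`. -/

/-- The column word of a semistandard Young tableau: the entries of each column are read
from bottom to top, the columns being taken from left to right (entries shifted by `+1`,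
see above). -/
def colWord {μ : YoungDiagram} (T : SemistandardYoungTableau μ) : List ℕ :=
  (List.range (μ.rowLen 0)).flatMap fun j =>
    ((List.range (μ.colLen j)).reverse).map fun i => T i j + 1

/-! ### Universal Schubert polynomials -/

/-- The index type for the coefficients `a_{i₁, …, i_n}`: sequences `(i₁, …, i_n)` with
`0 ≤ i_α ≤ α`; the component at `t : Fin n` is `i_{t+1} ∈ {0, …, t+1}`. -/
abbrev Seqs (n : ℕ) := ∀ t : Fin n, Fin (t.1 + 2)

/-- The elementary symmetric polynomial `e_k(x₁, …, x_j)`. -/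
def eP (k j : ℕ) : SPoly :=
  ∑ s ∈ Finset.powersetCard k (Finset.Icc 1 j), ∏ i ∈ s, MvPolynomial.X i

/-- The monomial `c_i(j)` in the polynomial ring on variables indexed by `ℕ × ℕ`
(with the convention `c_0(j) = 1`). -/
def cM (i j : ℕ) : MvPolynomial (ℕ × ℕ) ℤ := if i = 0 then 1 else MvPolynomial.X (i, j)

/-- `U` is the family of single universal Schubert polynomials (with respect to `n`)
in the abstract variables `c_i(j) = X (i, j)`, `1 ≤ i ≤ j ≤ n`, attached to the single
Schubert family `S`: for `w ∈ S_{n+1}` there are (uniquely determined) integers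
`a_{i₁,…,i_n}`, supported on sequences with `Σ i_α = ℓ(w)` and `i_α ≤ α`, with
`𝔖_w(X) = Σ a_{i₁,…,i_n} e_{i₁}(x₁) ⋯ e_{i_n}(x₁,…,x_n)` and
`𝔖_w(c) = Σ a_{i₁,…,i_n} c_{i₁}(1) ⋯ c_{i_n}(n)`. -/
def IsUnivFamily (n : ℕ) (S : Perm' → SPoly) (U : Perm' → MvPolynomial (ℕ × ℕ) ℤ) : Prop :=
  ∀ w : Perm', MemS (n + 1) w → ∃ a : Seqs n → ℤ,
    (∀ q : Seqs n, a q ≠ 0 → (∑ t : Fin n, ((q t : ℕ))) = len w) ∧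
    S w = ∑ q : Seqs n, MvPolynomial.C (a q) * ∏ t : Fin n, eP (q t) (t.1 + 1) ∧
    U w = ∑ q : Seqs n, MvPolynomial.C (a q) * ∏ t : Fin n, cM (q t) (t.1 + 1)

/-- Substitute the alphabet `f` (i.e. `c_i(j) := f i j`) into a universal polynomial. -/
def substA (f : ℕ → ℕ → A) (p : MvPolynomial (ℕ × ℕ) ℤ) : A :=
  MvPolynomial.aeval (fun ij : ℕ × ℕ => f ij.1 ij.2) p

/-- The double universal Schubert polynomial
`𝔖_w(c; d) = Σ_{u·v=w} (-1)^{ℓ(u)} 𝔖_{u⁻¹}(d) 𝔖_v(c)`, the sum being over all reduced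
factorizations `u·v = w`, evaluated on the two alphabets `cA` and `dA`. -/
def dblU (U : Perm' → MvPolynomial (ℕ × ℕ) ℤ) (cA dA : ℕ → ℕ → A) (w : Perm') : A :=
  ∑ᶠ uv : Perm' × Perm',
    if uv.1 * uv.2 = w ∧ len uv.1 + len uv.2 = len w then
      (-1 : A) ^ len uv.1 * substA dA (U uv.1⁻¹) * substA cA (U uv.2)
    else 0

/-!
Sending a sequence of tableaux to the permutations `uᵢ = wordProd (colWord Tᵢ)` maps the left-hand
set onto the bounded reduced factorizations of `w`: a concatenation of words is a reduced word of
`w` exactly when every piece is reduced and the lengths of the pieces add up to `ℓ(w)`. The fibre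
over `(uᵢ)` is then the product of the sets counted by `N(uᵢ, λ^i)`, because the entry bound is
automatic there: since `ℓ` equals the number of inversions, the last letter `e` of a reduced word of
`u` is a descent of `u`, and a descent of `u ∈ S_{m+1}` satisfies `1 ≤ e ≤ m`.
-/

lemma wordProd_append (a b : List ℕ) : wordProd (a ++ b) = wordProd a * wordProd b := by
  simp [wordProd]

lemma wordProd_singleton (e : ℕ) : wordProd [e] = sT e := by
  simp [wordProd]

lemma wordProd_flatten (L : List (List ℕ)) : wordProd L.flatten = (L.map wordProd).prod := by
  induction L with
  | nil => rfl
  | cons l L ih => simp [wordProd_append, ih]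

lemma sT_mul_self (e : ℕ) : sT e * sT e = 1 :=
  Equiv.swap_mul_self _ _

lemma len_le_length {w : Perm'} {l : List ℕ} (h : wordProd l = w) : len w ≤ l.length :=
  Nat.sInf_le ⟨l, h, rfl⟩

lemma exists_isReducedWord {w : Perm'} {l : List ℕ} (h : wordProd l = w) :
    ∃ r, IsReducedWord w r :=
  Nat.sInf_mem (s := {m | ∃ r : List ℕ, wordProd r = w ∧ r.length = m}) ⟨_, l, h, rfl⟩

lemma len_wordProd_mul_le (a b : List ℕ) :
    len (wordProd a * wordProd b) ≤ len (wordProd a) + len (wordProd b) := by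
  obtain ⟨ra, hra, hra'⟩ := exists_isReducedWord (rfl : wordProd a = _)
  obtain ⟨rb, hrb, hrb'⟩ := exists_isReducedWord (rfl : wordProd b = _)
  have := len_le_length (l := ra ++ rb) (by rw [wordProd_append, hra, hrb])
  simp only [List.length_append] at this
  omega

lemma len_prod_wordProd_le (L : List (List ℕ)) :
    len (L.map wordProd).prod ≤ (L.map (len ∘ wordProd)).sum := by
  induction L with
  | nil => exact (len_le_length (l := []) rfl).trans_eq rfl
  | cons l L ih =>
    rw [List.map_cons, List.prod_cons, ← wordProd_flatten]
    have := len_wordProd_mul_le l L.flatten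
    rw [wordProd_flatten] at this ⊢
    simp only [List.map_cons, List.sum_cons, Function.comp_apply]
    omega

lemma IsReducedWord.of_flatten {k : ℕ} {w : Perm'} {ls : Fin k → List ℕ}
    (h : IsReducedWord w (List.ofFn ls).flatten) :
    (∀ i, IsReducedWord (wordProd (ls i)) (ls i)) ∧ ∑ i, len (wordProd (ls i)) = len w := by
  have hlen : ∑ i, (ls i).length = len w := by
    rw [← h.2, List.length_flatten, List.map_ofFn, List.sum_ofFn]; rfl
  have hsub : len w ≤ ∑ i, len (wordProd (ls i)) := by
    have := len_prod_wordProd_le (List.ofFn ls)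
    rwa [← wordProd_flatten, h.1, List.map_ofFn, List.sum_ofFn] at this
  have hle : ∀ i ∈ Finset.univ, len (wordProd (ls i)) ≤ (ls i).length :=
    fun i _ => len_le_length rfl
  have hsum : ∑ i, len (wordProd (ls i)) = ∑ i, (ls i).length :=
    le_antisymm (Finset.sum_le_sum hle) (by omega)
  exact ⟨fun i => ⟨rfl, ((Finset.sum_eq_sum_iff_of_le hle).mp hsum i (Finset.mem_univ i)).symm⟩,
    by omega⟩

lemma IsReducedWord.flatten {k : ℕ} {w : Perm'} {ls : Fin k → List ℕ} {us : Fin k → Perm'}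
    (hred : ∀ i, IsReducedWord (us i) (ls i)) (hprod : (List.ofFn us).prod = w)
    (hsum : ∑ i, len (us i) = len w) :
    IsReducedWord w (List.ofFn ls).flatten := by
  refine ⟨?_, ?_⟩
  · rw [wordProd_flatten, List.map_ofFn, ← hprod]
    exact congrArg _ (List.ofFn_inj.mpr (funext fun i => (hred i).1))
  · rw [List.length_flatten, List.map_ofFn, List.sum_ofFn, ← hsum]
    exact Finset.sum_congr rfl fun i _ => (hred i).2

lemma IsReducedWord.of_append_singleton {u : Perm'} {l : List ℕ} {e : ℕ}
    (h : IsReducedWord u (l ++ [e])) : IsReducedWord (u * sT e) l := by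
  have hu : u * sT e = wordProd l := by
    rw [← h.1, wordProd_append, wordProd_singleton, mul_assoc, sT_mul_self, mul_one]
  refine ⟨hu.symm, le_antisymm ?_ (len_le_length hu.symm)⟩
  have h1 := len_wordProd_mul_le l [e]
  have h2 := len_le_length (wordProd_singleton e)
  rw [← wordProd_append, h.1, ← h.2, wordProd_singleton] at h1
  simp only [List.length_append, List.length_singleton] at h1 h2
  rw [hu]
  omega

def invSet (w : Perm') : Set (ℕ × ℕ) := {p | p.1 < p.2 ∧ w p.2 < w p.1}

def invCount (w : Perm') : ℕ := (invSet w).ncard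

lemma invSet_one : invSet 1 = ∅ := by
  ext ⟨i, j⟩
  simp only [invSet, Set.mem_ofPred_eq, Equiv.Perm.one_apply, Set.mem_empty_iff_false,
    iff_false, not_and, not_lt]
  exact le_of_lt

lemma invSet_mul_sT_subset (w : Perm') (e : ℕ) :
    invSet (w * sT e) ⊆ insert (e, e + 1) (Prod.map (sT e) (sT e) ⁻¹' invSet w) := by
  rintro ⟨i, j⟩ ⟨hij, hw⟩
  simp only [Equiv.Perm.mul_apply, sT, Equiv.swap_apply_def] at hw
  simp only [invSet, sT, Set.mem_insert_iff, Prod.mk.injEq, Set.mem_preimage, Prod.map_apply,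
    Set.mem_ofPred_eq, Equiv.swap_apply_def]
  split_ifs at hw ⊢ <;> omega

lemma invSet_mul_sT_of_lt {w : Perm'} {e : ℕ} (h : w e < w (e + 1)) :
    invSet (w * sT e) = insert (e, e + 1) (Prod.map (sT e) (sT e) ⁻¹' invSet w) := by
  refine (invSet_mul_sT_subset w e).antisymm ?_
  rintro ⟨i, j⟩ hij
  simp only [invSet, sT, Set.mem_insert_iff, Prod.mk.injEq, Set.mem_preimage, Prod.map_apply,
    Set.mem_ofPred_eq, Equiv.swap_apply_def, Equiv.Perm.mul_apply] at hij ⊢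
  split_ifs at hij ⊢ <;> omega

lemma finite_invSet_mul_sT {w : Perm'} (hfin : (invSet w).Finite) (e : ℕ) :
    (invSet (w * sT e)).Finite :=
  ((hfin.preimage (Prod.map_injective.mpr ⟨(sT e).injective, (sT e).injective⟩).injOn).insert
    _).subset (invSet_mul_sT_subset w e)

lemma invCount_mul_sT_of_lt {w : Perm'} (hfin : (invSet w).Finite) {e : ℕ}
    (h : w e < w (e + 1)) : invCount (w * sT e) = invCount w + 1 := by
  have hbij : Function.Bijective (Prod.map (sT e) (sT e)) :=
    (sT e).bijective.prodMap (sT e).bijective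
  have hnot : (e, e + 1) ∉ Prod.map (sT e) (sT e) ⁻¹' invSet w := by
    simp [invSet, sT]
  rw [invCount, invSet_mul_sT_of_lt h,
    Set.ncard_insert_of_notMem hnot (hfin.preimage hbij.1.injOn),
    Set.ncard_preimage_of_injective_subset_range hbij.1 (by simp [hbij.2.range_eq])]
  rfl

lemma invCount_mul_sT_of_gt {w : Perm'} (hfin : (invSet w).Finite) {e : ℕ}
    (h : w (e + 1) < w e) : invCount w = invCount (w * sT e) + 1 := by
  have := invCount_mul_sT_of_lt (finite_invSet_mul_sT hfin e) (e := e) (by simpa [sT] using h)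
  rwa [mul_assoc, sT_mul_self, mul_one] at this

lemma invCount_mul_sT_le {w : Perm'} (hfin : (invSet w).Finite) (e : ℕ) :
    invCount (w * sT e) ≤ invCount w + 1 := by
  rcases lt_or_gt_of_ne ((w.injective.ne (Nat.succ_ne_self e).symm)) with h | h
  · exact (invCount_mul_sT_of_lt hfin h).le
  · have := invCount_mul_sT_of_gt hfin h
    omega

lemma finite_invSet_wordProd (l : List ℕ) : (invSet (wordProd l)).Finite := by
  induction l using List.reverseRecOn with
  | nil => simp [show wordProd [] = 1 from rfl, invSet_one]
  | append_singleton l e ih =>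
    simpa [wordProd_append, wordProd_singleton] using finite_invSet_mul_sT ih e

lemma invCount_wordProd_le (l : List ℕ) : invCount (wordProd l) ≤ l.length := by
  induction l using List.reverseRecOn with
  | nil => simp [show wordProd [] = 1 from rfl, invCount, invSet_one]
  | append_singleton l e ih =>
    have := invCount_mul_sT_le (finite_invSet_wordProd l) e
    rw [wordProd_append, wordProd_singleton, List.length_append, List.length_singleton]
    omega

-- A permutation of `ℕ` without descents is strictly increasing, hence the identity.
lemma exists_descent_of_ne_one {w : Perm'} (hw : w ≠ 1) : ∃ e, w (e + 1) < w e := by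
  by_contra! hasc
  have hmono : StrictMono w := strictMono_nat_of_lt_succ fun e =>
    (hasc e).lt_of_ne (w.injective.ne (Nat.succ_ne_self e).symm)
  apply hw
  ext k
  exact congrArg (· k) (Subsingleton.elim (hmono.orderIsoOfSurjective w w.surjective)
    (OrderIso.refl ℕ))

lemma exists_wordProd_eq_length_invCount {w : Perm'} (hfin : (invSet w).Finite) :
    ∃ l, wordProd l = w ∧ l.length = invCount w := by
  induction hm : invCount w using Nat.strong_induction_on generalizing w with
  | _ m ih =>
    by_cases hw : w = 1
    · subst hw
      exact ⟨[], rfl, by simp [← hm, invCount, invSet_one]⟩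
    obtain ⟨e, he⟩ := exists_descent_of_ne_one hw
    have hdrop := invCount_mul_sT_of_gt hfin he
    obtain ⟨l, hl, hlen⟩ := ih _ (by omega) (finite_invSet_mul_sT hfin e) rfl
    refine ⟨l ++ [e], ?_, by simp [hlen]; omega⟩
    rw [wordProd_append, hl, wordProd_singleton, mul_assoc, sT_mul_self, mul_one]

lemma len_eq_invCount {w : Perm'} (hfin : (invSet w).Finite) : len w = invCount w := by
  obtain ⟨l, hl, hlen⟩ := exists_wordProd_eq_length_invCount hfin
  obtain ⟨r, hr, hrlen⟩ := exists_isReducedWord hl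
  have := invCount_wordProd_le r
  rw [hr] at this
  have := len_le_length hl
  omega

lemma IsReducedWord.apply_succ_lt {u : Perm'} {l : List ℕ} {e : ℕ}
    (h : IsReducedWord u (l ++ [e])) : u (e + 1) < u e := by
  have hfin : (invSet u).Finite := h.1 ▸ finite_invSet_wordProd _
  by_contra! hasc
  have hup := invCount_mul_sT_of_lt hfin
    (hasc.lt_of_ne (u.injective.ne (Nat.succ_ne_self e).symm))
  have hle := invCount_wordProd_le l
  rw [h.of_append_singleton.1, hup, ← len_eq_invCount hfin, ← h.2] at hle
  simp at hle

lemma MemS.mul {N : ℕ} {u v : Perm'} (hu : MemS N u) (hv : MemS N v) : MemS N (u * v) :=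
  ⟨by simp [hu.1, hv.1], fun k hk => by simp [hv.2 k hk, hu.2 k hk]⟩

lemma memS_sT {m e : ℕ} (he₁ : 1 ≤ e) (he : e ≤ m) : MemS (m + 1) (sT e) :=
  ⟨Equiv.swap_apply_of_ne_of_ne (by omega) (by omega),
    fun k hk => Equiv.swap_apply_of_ne_of_ne (by omega) (by omega)⟩

lemma memS_wordProd {m : ℕ} {l : List ℕ} (h : ∀ e ∈ l, 1 ≤ e ∧ e ≤ m) :
    MemS (m + 1) (wordProd l) := by
  induction l with
  | nil => exact ⟨rfl, fun _ _ => rfl⟩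
  | cons e l ih =>
    simp only [List.mem_cons, forall_eq_or_imp] at h
    exact (memS_sT h.1.1 h.1.2).mul (ih h.2)

lemma MemS.apply_le {N : ℕ} {v : Perm'} (hv : MemS N v) {k : ℕ} (hk : k ≤ N) : v k ≤ N := by
  by_contra! hlt
  have := v.injective (hv.2 _ hlt)
  omega

lemma MemS.mem_Icc_of_apply_succ_lt {m e : ℕ} {v : Perm'} (hv : MemS (m + 1) v)
    (h : v (e + 1) < v e) : 1 ≤ e ∧ e ≤ m := by
  refine ⟨Nat.one_le_iff_ne_zero.mpr ?_, ?_⟩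
  · rintro rfl
    rw [hv.1] at h
    omega
  · by_contra! he
    rw [hv.2 (e + 1) (by omega)] at h
    have := hv.apply_le (k := e)
    have := hv.2 e
    omega

lemma IsReducedWord.mem_Icc_of_memS {m : ℕ} {u : Perm'} {l : List ℕ} (hu : MemS (m + 1) u)
    (h : IsReducedWord u l) : ∀ e ∈ l, 1 ≤ e ∧ e ≤ m := by
  induction l using List.reverseRecOn generalizing u with
  | nil => simp
  | append_singleton l e ih =>
    have he := hu.mem_Icc_of_apply_succ_lt h.apply_succ_lt
    have hl := ih (hu.mul (memS_sT he.1 he.2)) h.of_append_singleton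
    simp only [List.mem_append, List.mem_singleton]
    rintro f (hf | rfl)
    exacts [hl f hf, he]

lemma finite_setOf_memS (N : ℕ) : {v : Perm' | MemS N v}.Finite := by
  have : Finite {v : Perm' // ∀ k, ¬ k ≤ N → v k = k} :=
    Finite.of_equiv _ (Equiv.Perm.subtypeEquivSubtypePerm (· ≤ N))
  exact Set.finite_coe_iff.mp <| Finite.of_injective
    (fun v : {v : Perm' | MemS N v} => (⟨v.1, fun k hk => v.2.2 k (by omega)⟩ :
      {v : Perm' // ∀ k, ¬ k ≤ N → v k = k}))
    fun _ _ h => Subtype.ext (congrArg (·.1) h :)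

section Tableaux

variable {μ : YoungDiagram}

lemma mem_colWord {T : SemistandardYoungTableau μ} {e : ℕ} :
    e ∈ colWord T ↔ ∃ a b, (a, b) ∈ μ ∧ T a b + 1 = e := by
  simp only [colWord, List.mem_flatMap, List.mem_map, List.mem_reverse, List.mem_range]
  constructor
  · rintro ⟨b, -, a, ha, rfl⟩
    exact ⟨a, b, YoungDiagram.mem_iff_lt_colLen.mpr ha, rfl⟩
  · rintro ⟨a, b, hab, rfl⟩
    exact ⟨b, YoungDiagram.mem_iff_lt_rowLen.mp (μ.up_left_mem (Nat.zero_le a) le_rfl hab),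
      a, YoungDiagram.mem_iff_lt_colLen.mp hab, rfl⟩

lemma memS_wordProd_colWord {m : ℕ} {T : SemistandardYoungTableau μ}
    (h : ∀ a b, (a, b) ∈ μ → T a b + 1 ≤ m) : MemS (m + 1) (wordProd (colWord T)) :=
  memS_wordProd fun _ he => by
    obtain ⟨a, b, hab, rfl⟩ := mem_colWord.mp he
    exact ⟨by omega, h a b hab⟩

lemma IsReducedWord.entry_le {m : ℕ} {u : Perm'} {T : SemistandardYoungTableau μ}
    (hu : MemS (m + 1) u) (h : IsReducedWord u (colWord T)) :
    ∀ a b, (a, b) ∈ μ → T a b + 1 ≤ m :=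
  fun a b hab => (h.mem_Icc_of_memS hu _ (mem_colWord.mpr ⟨a, b, hab, rfl⟩)).2

lemma finite_tableaux_entry_le (m : ℕ) :
    Finite {T : SemistandardYoungTableau μ // ∀ a b, (a, b) ∈ μ → T a b + 1 ≤ m} := by
  refine Finite.of_injective (β := μ.cells → Fin (m + 1))
    (fun T c => ⟨T.1 c.1.1 c.1.2, by have := T.2 c.1.1 c.1.2 ((μ.mem_cells _).mp c.2); omega⟩) ?_
  intro T T' h
  ext i j
  by_cases hij : (i, j) ∈ μ
  · simpa using congrFun h ⟨(i, j), (μ.mem_cells _).mpr hij⟩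
  · rw [T.1.zeros hij, T'.1.zeros hij]

lemma finite_reducedTableaux {m : ℕ} {u : Perm'} (hu : MemS (m + 1) u) :
    Finite {T : SemistandardYoungTableau μ // IsReducedWord u (colWord T)} :=
  have := finite_tableaux_entry_le (μ := μ) m
  Finite.of_injective (fun T => (⟨T.1, T.2.entry_le hu⟩ :
      {T : SemistandardYoungTableau μ // ∀ a b, (a, b) ∈ μ → T a b + 1 ≤ m}))
    fun _ _ h => Subtype.ext (congrArg (·.1) h :)

end Tableaux

section Counting

lemma natCard_sigma_subtype_eq_finsum {ι : Type*} {Q : ι → Prop} [DecidablePred Q]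
    {F : ι → Type*} [Finite {i // Q i}] [∀ j : {i // Q i}, Finite (F j)] :
    Nat.card (Σ j : {i // Q i}, F j) = ∑ᶠ i, if Q i then Nat.card (F i) else 0 := by
  have := Fintype.ofFinite {i // Q i}
  rw [Nat.card_sigma, ← finsum_eq_sum_of_fintype,
    finsum_subtype_eq_finsum_cond (f := fun i => Nat.card (F i))]
  simp_rw [finsum_eq_if]

variable {k : ℕ}

abbrev IsBoundedReducedFactorization (N : Fin k → ℕ) (w : Perm') (us : Fin k → Perm') : Prop :=
  (List.ofFn us).prod = w ∧ (∑ i, len (us i)) = len w ∧ ∀ i, MemS (N i + 1) (us i)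

lemma finite_setOf_isBoundedReducedFactorization (N : Fin k → ℕ) (w : Perm') :
    {us | IsBoundedReducedFactorization N w us}.Finite :=
  (Set.Finite.pi fun i => finite_setOf_memS (N i + 1)).subset fun _ hus i _ => hus.2.2 i

abbrev BoundedTableauxWithReducedWord (N : Fin k → ℕ) (w : Perm') (μ : Fin k → YoungDiagram) :=
  {T : ∀ i, SemistandardYoungTableau (μ i) //
    (∀ i, ∀ a b : ℕ, (a, b) ∈ μ i → T i a b + 1 ≤ N i) ∧
    IsReducedWord w ((List.ofFn fun i => colWord (T i)).flatten)}

def factorizationOfColWords {N : Fin k → ℕ} {w : Perm'} {μ : Fin k → YoungDiagram}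
    (T : BoundedTableauxWithReducedWord N w μ) : {us // IsBoundedReducedFactorization N w us} :=
  ⟨fun i => wordProd (colWord (T.1 i)),
    by have := T.2.2.1; rwa [wordProd_flatten, List.map_ofFn] at this,
    T.2.2.of_flatten.2, fun i => memS_wordProd_colWord (T.2.1 i)⟩

def factorizationOfColWordsFiberEquiv {N : Fin k → ℕ} {w : Perm'} {μ : Fin k → YoungDiagram}
    (us : {us // IsBoundedReducedFactorization N w us}) :
    {T : BoundedTableauxWithReducedWord N w μ // factorizationOfColWords T = us} ≃
      ∀ i, {T : SemistandardYoungTableau (μ i) // IsReducedWord (us.1 i) (colWord T)} where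
  toFun T i := ⟨T.1.1 i, by
    rw [← congrFun (congrArg Subtype.val T.2) i]
    exact T.1.2.2.of_flatten.1 i⟩
  invFun Ts := ⟨⟨fun i => (Ts i).1, fun i => (Ts i).2.entry_le (us.2.2.2 i),
      IsReducedWord.flatten (fun i => (Ts i).2) us.2.1 us.2.2.1⟩,
    Subtype.ext (funext fun i => (Ts i).2.1)⟩
  left_inv _ := rfl
  right_inv _ := rfl

theorem natCard_boundedTableauxWithReducedWord (N : Fin k → ℕ) (w : Perm')
    (μ : Fin k → YoungDiagram) :
    Nat.card (BoundedTableauxWithReducedWord N w μ) =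
      ∑ᶠ us : Fin k → Perm',
        if IsBoundedReducedFactorization N w us then
          ∏ i, Nat.card {T : SemistandardYoungTableau (μ i) // IsReducedWord (us i) (colWord T)}
        else 0 := by
  have : Finite {us // IsBoundedReducedFactorization N w us} :=
    (finite_setOf_isBoundedReducedFactorization N w).to_subtype
  have (us : {us // IsBoundedReducedFactorization N w us}) (i : Fin k) :=
    finite_reducedTableaux (μ := μ i) (us.2.2.2 i)
  rw [← Nat.card_congr (Equiv.sigmaFiberEquiv factorizationOfColWords),
    Nat.card_congr (Equiv.sigmaCongrRight factorizationOfColWordsFiberEquiv),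
    natCard_sigma_subtype_eq_finsum (F := fun us : Fin k → Perm' => ∀ i,
      {T : SemistandardYoungTableau (μ i) // IsReducedWord (us i) (colWord T)})]
  simp_rw [Nat.card_pi]

end Counting

theorem statement14_general (n : ℕ) (w : Perm')
    (lam : Fin (2 * n - 1) → YoungDiagram) :
    Nat.card {T : ∀ i : Fin (2 * n - 1), SemistandardYoungTableau (lam i).transpose //
        (∀ i, ∀ a b : ℕ, (a, b) ∈ (lam i).transpose →
          T i a b + 1 ≤ min (i.1 + 1) (2 * n - (i.1 + 1))) ∧
        IsReducedWord w ((List.ofFn fun i => colWord (T i)).flatten)} =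
      ∑ᶠ us : Fin (2 * n - 1) → Perm',
        if (List.ofFn us).prod = w ∧ (∑ i, len (us i)) = len w ∧
            ∀ i : Fin (2 * n - 1), MemS (min (i.1 + 1) (2 * n - (i.1 + 1)) + 1) (us i) then
          ∏ i : Fin (2 * n - 1),
            Nat.card {T : SemistandardYoungTableau (lam i).transpose //
              IsReducedWord (us i) (colWord T)}
        else 0 :=
  natCard_boundedTableauxWithReducedWord (fun i => min (i.1 + 1) (2 * n - (i.1 + 1))) w
    (fun i => (lam i).transpose)

/-- Theorem 1 combined with Theorem 2 of the paper.  The number of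
sequences of semistandard tableaux `(T₁, …, T_{2n-1})` with `T_i` of shape `(λ^i)'`,
entries at most `min(i, 2n-i)`, and concatenated column word a reduced word for `w`,
equals `Σ ∏ᵢ N(uᵢ, λ^i)`, the sum being over all reduced factorizations
`u₁ u₂ ⋯ u_{2n-1} = w` with `uᵢ ∈ S_{min(i,2n-i)+1}`, where `N(u, α)` is the number of
semistandard tableaux of shape `α'` whose column word is a reduced word for `u`. -/
theorem statement14 (n : ℕ) (hn : 1 ≤ n) (w : Perm') (hw : MemS (n + 1) w)
    (lam : Fin (2 * n - 1) → YoungDiagram) :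
    Nat.card {T : ∀ i : Fin (2 * n - 1), SemistandardYoungTableau (lam i).transpose //
        (∀ i, ∀ a b : ℕ, (a, b) ∈ (lam i).transpose →
          T i a b + 1 ≤ min (i.1 + 1) (2 * n - (i.1 + 1))) ∧
        IsReducedWord w ((List.ofFn fun i => colWord (T i)).flatten)} =
      ∑ᶠ us : Fin (2 * n - 1) → Perm',
        if (List.ofFn us).prod = w ∧ (∑ i, len (us i)) = len w ∧
            ∀ i : Fin (2 * n - 1), MemS (min (i.1 + 1) (2 * n - (i.1 + 1)) + 1) (us i) then
          ∏ i : Fin (2 * n - 1),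
            Nat.card {T : SemistandardYoungTableau (lam i).transpose //
              IsReducedWord (us i) (colWord T)}
        else 0 :=
  statement14_general n w lam

end SchubertQuiver
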